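/- The gamma KL divergence formula is nonnegative: for a₁,a₂,b₁,b₂ > 0, a₂·ln(b₁/b₂) - ln(Γ(a₁)/Γ(a₂)) + (a₁-a₂)ψ(a₁) - (b₁-b₂)(a₁/b₁) ≥ 0, with equality iff a₁=a₂ and b₁=b₂. -/

import Mathlib

/-!
With `s = a₁ b₂ / (a₂ b₁)` and `g t = log Γ(t) - (t log t - t)`, the divergence splits as
`a₂ (s - 1 - log s) + (g a₂ - g a₁ - g'(a₁) (a₂ - a₁))`. The first term is nonnegative since
`log s ≤ s - 1`; the second is the gap between `g` and its tangent line at `a₁`, positive for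
`a₂ ≠ a₁` because `g' = ψ - log` is strictly increasing. That monotonicity comes from the series
`log x - ψ x = ∑ₖ (1/(x+k) - log (1 + 1/(x+k)))`, whose terms decrease strictly in `x`; the series
is obtained by telescoping `ψ (x + 1) = ψ x + 1/x`, using `log x - 1/x ≤ ψ x ≤ log x`, which is
the log-convexity of Γ.
-/

open Real

/-- Digamma function ψ = Γ'/Γ. -/
noncomputable def digamma (x : ℝ) : ℝ := deriv Real.Gamma x / Real.Gamma x

open Set Filter Topology

lemma hasDerivAt_log_Gamma {x : ℝ} (hx : 0 < x) :
    HasDerivAt (fun y ↦ log (Gamma y)) (digamma x) x :=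
  (differentiableAt_Gamma fun m ↦ by linarith [(m.cast_nonneg : (0 : ℝ) ≤ m)]).hasDerivAt.log
    (Gamma_pos_of_pos hx).ne'

lemma log_Gamma_add_one {x : ℝ} (hx : 0 < x) : log (Gamma (x + 1)) = log x + log (Gamma x) := by
  rw [Gamma_add_one hx.ne', log_mul hx.ne' (Gamma_pos_of_pos hx).ne']

lemma digamma_add_one {x : ℝ} (hx : 0 < x) : digamma (x + 1) = digamma x + x⁻¹ := by
  have hshift : HasDerivAt (fun y ↦ log (Gamma (y + 1))) (digamma (x + 1)) x :=
    (hasDerivAt_log_Gamma (by linarith)).comp_add_const x 1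
  have hsplit : HasDerivAt (fun y ↦ log y + log (Gamma y)) (x⁻¹ + digamma x) x :=
    (hasDerivAt_log hx.ne').add (hasDerivAt_log_Gamma hx)
  have heq : (fun y ↦ log (Gamma (y + 1))) =ᶠ[𝓝 x] fun y ↦ log y + log (Gamma y) := by
    filter_upwards [eventually_gt_nhds hx] with y hy using log_Gamma_add_one hy
  rw [add_comm (digamma x)]
  exact hshift.unique (hsplit.congr_of_eventuallyEq heq)

lemma digamma_add_nat {x : ℝ} (hx : 0 < x) (n : ℕ) :
    digamma (x + n) = digamma x + ∑ k ∈ Finset.range n, (x + k)⁻¹ := by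
  induction n with
  | zero => simp
  | succ n ih =>
    rw [Nat.cast_succ, ← add_assoc, digamma_add_one (by positivity), ih, Finset.sum_range_succ,
      add_assoc]

lemma slope_log_Gamma_add_one {x : ℝ} (hx : 0 < x) :
    slope (fun y ↦ log (Gamma y)) x (x + 1) = log x := by
  rw [slope_def_field, log_Gamma_add_one hx]
  ring

lemma digamma_le_log {x : ℝ} (hx : 0 < x) : digamma x ≤ log x := by
  have h := convexOn_log_Gamma.le_slope_of_hasDerivAt hx (mem_Ioi.mpr (by linarith)) (lt_add_one x)
    (hasDerivAt_log_Gamma hx)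
  rwa [Function.comp_def, slope_log_Gamma_add_one hx] at h

lemma log_sub_inv_le_digamma {x : ℝ} (hx : 0 < x) : log x - x⁻¹ ≤ digamma x := by
  have h := convexOn_log_Gamma.slope_le_of_hasDerivAt hx (mem_Ioi.mpr (by linarith)) (lt_add_one x)
    (hasDerivAt_log_Gamma (by linarith))
  rw [Function.comp_def, slope_log_Gamma_add_one hx, digamma_add_one hx] at h
  linarith

lemma tendsto_digamma_sub_log_atTop :
    Tendsto (fun x ↦ digamma x - log x) atTop (𝓝 0) := by
  have hinv : Tendsto (fun x : ℝ ↦ -x⁻¹) atTop (𝓝 0) := by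
    simpa using (tendsto_inv_atTop_zero (𝕜 := ℝ)).neg
  refine tendsto_of_tendsto_of_tendsto_of_le_of_le' hinv tendsto_const_nhds ?_ ?_
  · filter_upwards [eventually_gt_atTop 0] with x hx
    linarith [log_sub_inv_le_digamma hx]
  · filter_upwards [eventually_gt_atTop 0] with x hx
    linarith [digamma_le_log hx]

lemma log_add_one_sub_log_le_inv {x : ℝ} (hx : 0 < x) : log (x + 1) - log x ≤ x⁻¹ := by
  rw [← log_div (by positivity) hx.ne']
  calc log ((x + 1) / x) ≤ (x + 1) / x - 1 := log_le_sub_one_of_pos (by positivity)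
    _ = x⁻¹ := by field_simp; ring

lemma strictAntiOn_inv_sub_log_add_one_sub_log :
    StrictAntiOn (fun x ↦ x⁻¹ - (log (x + 1) - log x)) (Ioi 0) := by
  intro a (ha : 0 < a) b (hb : 0 < b) hab
  have hlog : log (a + 1) - log a - (log (b + 1) - log b)
      = log ((a + 1) * b / (a * (b + 1))) := by
    rw [log_div (by positivity) (by positivity), log_mul (by positivity) hb.ne',
      log_mul ha.ne' (by positivity)]
    ring
  have hlt : (a + 1) * b / (a * (b + 1)) - 1 < a⁻¹ - b⁻¹ := by
    rw [div_sub_one (by positivity), div_lt_iff₀ (by positivity)]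
    field_simp
    nlinarith
  have := log_le_sub_one_of_pos (x := (a + 1) * b / (a * (b + 1))) (by positivity)
  dsimp only
  linarith

lemma hasSum_log_sub_digamma {x : ℝ} (hx : 0 < x) :
    HasSum (fun k : ℕ ↦ (x + k)⁻¹ - (log (x + k + 1) - log (x + k))) (log x - digamma x) := by
  rw [hasSum_iff_tendsto_nat_of_nonneg
    (fun k ↦ sub_nonneg.mpr (log_add_one_sub_log_le_inv (by positivity)))]
  have hpartial (n : ℕ) : ∑ k ∈ Finset.range n, ((x + k)⁻¹ - (log (x + k + 1) - log (x + k)))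
      = log x - digamma x + (digamma (x + n) - log (x + n)) := by
    have htelescope :
        ∑ k ∈ Finset.range n, (log (x + k + 1) - log (x + k)) = log (x + n) - log x := by
      simpa [add_assoc] using Finset.sum_range_sub (fun k : ℕ ↦ log (x + k)) n
    rw [Finset.sum_sub_distrib, htelescope, digamma_add_nat hx n]
    ring
  simp_rw [hpartial]
  simpa using (tendsto_digamma_sub_log_atTop.comp
    (tendsto_atTop_add_const_left _ x tendsto_natCast_atTop_atTop)).const_add (log x - digamma x)

lemma strictMonoOn_digamma_sub_log : StrictMonoOn (fun x ↦ digamma x - log x) (Ioi 0) := by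
  intro u (hu : 0 < u) v (hv : 0 < v) huv
  have hterm (k : ℕ) := strictAntiOn_inv_sub_log_add_one_sub_log
    (show 0 < u + k by positivity) (show 0 < v + k by positivity) (by linarith)
  have := hasSum_lt (i := 0) (fun k ↦ (hterm k).le) (hterm 0) (hasSum_log_sub_digamma hv)
    (hasSum_log_sub_digamma hu)
  linarith

lemma hasDerivAt_log_Gamma_sub_mul_log {x : ℝ} (hx : 0 < x) :
    HasDerivAt (fun t ↦ log (Gamma t) - (t * log t - t)) (digamma x - log x) x := by
  have h := (hasDerivAt_log_Gamma hx).fun_sub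
    (((hasDerivAt_id' x).fun_mul (hasDerivAt_log hx.ne')).fun_sub (hasDerivAt_id' x))
  refine h.congr_deriv ?_
  rw [one_mul, mul_inv_cancel₀ hx.ne']
  ring

lemma strictConvexOn_log_Gamma_sub_mul_log :
    StrictConvexOn ℝ (Ioi 0) (fun t ↦ log (Gamma t) - (t * log t - t)) := by
  refine StrictMonoOn.strictConvexOn_of_deriv (convex_Ioi 0)
    (fun t ht ↦ (hasDerivAt_log_Gamma_sub_mul_log ht).continuousAt.continuousWithinAt) ?_
  rw [interior_Ioi]
  exact strictMonoOn_digamma_sub_log.congr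
    fun t ht ↦ (hasDerivAt_log_Gamma_sub_mul_log ht).deriv.symm

lemma log_eq_sub_one_iff {x : ℝ} (hx : 0 < x) : log x = x - 1 ↔ x = 1 :=
  ⟨fun h ↦ by_contra fun hne ↦ (log_lt_sub_one_of_pos hx hne).ne h, fun h ↦ by simp [h]⟩

lemma StrictConvexOn.add_mul_sub_lt_of_hasDerivAt {S : Set ℝ} {f : ℝ → ℝ} {x y f' : ℝ}
    (hf : StrictConvexOn ℝ S f) (hx : x ∈ S) (hy : y ∈ S) (hxy : x ≠ y) (hf' : HasDerivAt f f' x) :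
    f x + f' * (y - x) < f y := by
  rcases hxy.lt_or_gt with hlt | hgt
  · have := hf.lt_slope_of_hasDerivAt hx hy hlt hf'
    rw [slope_def_field, lt_div_iff₀ (by linarith)] at this
    linarith
  · have := hf.slope_lt_of_hasDerivAt hy hx hgt hf'
    rw [slope_def_field, div_lt_iff₀ (by linarith)] at this
    linarith

lemma StrictConvexOn.add_mul_sub_le_of_hasDerivAt {S : Set ℝ} {f : ℝ → ℝ} {x y f' : ℝ}
    (hf : StrictConvexOn ℝ S f) (hx : x ∈ S) (hy : y ∈ S) (hf' : HasDerivAt f f' x) :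
    f x + f' * (y - x) ≤ f y := by
  rcases eq_or_ne x y with rfl | hxy
  · simp
  · exact (hf.add_mul_sub_lt_of_hasDerivAt hx hy hxy hf').le

lemma StrictConvexOn.add_mul_sub_eq_iff_of_hasDerivAt {S : Set ℝ} {f : ℝ → ℝ} {x y f' : ℝ}
    (hf : StrictConvexOn ℝ S f) (hx : x ∈ S) (hy : y ∈ S) (hf' : HasDerivAt f f' x) :
    f x + f' * (y - x) = f y ↔ x = y := by
  refine ⟨fun h ↦ by_contra fun hxy ↦ (hf.add_mul_sub_lt_of_hasDerivAt hx hy hxy hf').ne h, ?_⟩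
  rintro rfl
  ring

noncomputable def gammaKL (a₁ b₁ a₂ b₂ : ℝ) : ℝ :=
  a₂ * log (b₁ / b₂) - log (Gamma a₁ / Gamma a₂) + (a₁ - a₂) * digamma a₁ - (b₁ - b₂) * (a₁ / b₁)

lemma gammaKL_eq {a₁ b₁ a₂ b₂ : ℝ} (ha₁ : 0 < a₁) (hb₁ : 0 < b₁) (ha₂ : 0 < a₂) (hb₂ : 0 < b₂) :
    gammaKL a₁ b₁ a₂ b₂ =
      a₂ * (a₁ * b₂ / (a₂ * b₁) - 1 - log (a₁ * b₂ / (a₂ * b₁))) +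
      ((log (Gamma a₂) - (a₂ * log a₂ - a₂)) -
        ((log (Gamma a₁) - (a₁ * log a₁ - a₁)) + (digamma a₁ - log a₁) * (a₂ - a₁))) := by
  rw [gammaKL, log_div (Gamma_pos_of_pos ha₁).ne' (Gamma_pos_of_pos ha₂).ne',
    log_div hb₁.ne' hb₂.ne', log_div (by positivity) (by positivity),
    log_mul ha₁.ne' hb₂.ne', log_mul ha₂.ne' hb₁.ne']
  field_simp
  ring

lemma gammaKL_nonneg_and_eq_zero_iff {a₁ b₁ a₂ b₂ : ℝ} (ha₁ : 0 < a₁) (hb₁ : 0 < b₁)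
    (ha₂ : 0 < a₂) (hb₂ : 0 < b₂) :
    0 ≤ gammaKL a₁ b₁ a₂ b₂ ∧ (gammaKL a₁ b₁ a₂ b₂ = 0 ↔ a₁ = a₂ ∧ b₁ = b₂) := by
  set s := a₁ * b₂ / (a₂ * b₁) with hs_def
  have hs : 0 < s := by positivity
  have hlog : 0 ≤ s - 1 - log s := by linarith [log_le_sub_one_of_pos hs]
  have hconvex := strictConvexOn_log_Gamma_sub_mul_log
  have hderiv := hasDerivAt_log_Gamma_sub_mul_log ha₁
  have htangent := hconvex.add_mul_sub_le_of_hasDerivAt ha₁ ha₂ hderiv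
  have htangent_eq := hconvex.add_mul_sub_eq_iff_of_hasDerivAt ha₁ ha₂ hderiv
  rw [gammaKL_eq ha₁ hb₁ ha₂ hb₂, ← hs_def]
  have hratio_gap := mul_nonneg ha₂.le hlog
  have htangent_gap := sub_nonneg.mpr htangent
  refine ⟨add_nonneg hratio_gap htangent_gap, ?_⟩
  have hratio_gap_eq_zero : a₂ * (s - 1 - log s) = 0 ↔ s = 1 := by
    rw [mul_eq_zero, or_iff_right ha₂.ne', sub_eq_zero, eq_comm, log_eq_sub_one_iff hs]
  rw [add_eq_zero_iff_of_nonneg hratio_gap htangent_gap, hratio_gap_eq_zero,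
    sub_eq_zero.trans (eq_comm.trans htangent_eq)]
  constructor
  · rintro ⟨hs_one, rfl⟩
    rw [hs_def, div_eq_one_iff_eq (by positivity)] at hs_one
    exact ⟨rfl, (mul_left_cancel₀ ha₁.ne' hs_one).symm⟩
  · rintro ⟨rfl, rfl⟩
    exact ⟨div_self (by positivity), rfl⟩

theorem gamma_kl_nonneg (a₁ b₁ a₂ b₂ : ℝ) (ha₁ : 0 < a₁) (hb₁ : 0 < b₁)
    (ha₂ : 0 < a₂) (hb₂ : 0 < b₂) :
    0 ≤ a₂ * Real.log (b₁ / b₂) - Real.log (Real.Gamma a₁ / Real.Gamma a₂) +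
        (a₁ - a₂) * digamma a₁ - (b₁ - b₂) * (a₁ / b₁) ∧
      (a₂ * Real.log (b₁ / b₂) - Real.log (Real.Gamma a₁ / Real.Gamma a₂) +
        (a₁ - a₂) * digamma a₁ - (b₁ - b₂) * (a₁ / b₁) = 0 ↔
        a₁ = a₂ ∧ b₁ = b₂) :=
  gammaKL_nonneg_and_eq_zero_iff ha₁ hb₁ ha₂ hb₂
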